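/- For every subset S ⊆ {1,…,N} of size at least 2 and every v ∈ S: Δ₁(S,v) < 0 if and only if Δ₂(S,v) > 0. That is, under least-squares reconstruction, removing a vertex strictly increases the noiseless reconstruction error exactly when it strictly decreases the noise-sensitivity term. -/
import Mathlib


open Matrix

noncomputable section

def IsPinv {m n : Type*} [Fintype m] [Fintype n] (A : Matrix m n ℝ) (B : Matrix n m ℝ) : Prop :=
  A * B * A = A ∧ B * A * B = B ∧ (A * B)ᵀ = A * B ∧ (B * A)ᵀ = B * A

theorem isPinv_unique {m n : Type*} [Fintype m] [Fintype n] {A : Matrix m n ℝ}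
    {B C : Matrix n m ℝ} (hB : IsPinv A B) (hC : IsPinv A C) : B = C := by
  obtain ⟨hB1, hB2, hB3, hB4⟩ := hB
  obtain ⟨hC1, hC2, hC3, hC4⟩ := hC
  have hAB : A * B = A * C := by
    calc A * B = (A * B)ᵀ := hB3.symm
    _ = Bᵀ * Aᵀ := by rw [transpose_mul]
    _ = Bᵀ * (A * C * A)ᵀ := by rw [hC1]
    _ = Bᵀ * (Aᵀ * (A*C)ᵀ) := by rw [transpose_mul]
    _ = Bᵀ * Aᵀ * (A*C) := by rw [hC3, Matrix.mul_assoc]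
    _ = (A*B)ᵀ * (A*C) := by rw [transpose_mul]
    _ = A * B * (A * C) := by rw [hB3]
    _ = A * B * A * C := by simp only [Matrix.mul_assoc]
    _ = A * C := by rw [hB1]
  have hBA : B * A = C * A := by
    calc B * A = (B * A)ᵀ := hB4.symm
    _ = Aᵀ * Bᵀ := by rw [transpose_mul]
    _ = (A * C * A)ᵀ * Bᵀ := by rw [hC1]
    _ = (C*A)ᵀ * (Aᵀ * Bᵀ) := by simp only [transpose_mul, Matrix.mul_assoc]
    _ = C * A * (Aᵀ * Bᵀ) := by rw [hC4]
    _ = C * A * (B * A)ᵀ := by rw [transpose_mul]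
    _ = C * A * (B * A) := by rw [hB4]
    _ = C * (A * B * A) := by simp only [Matrix.mul_assoc]
    _ = C * A := by rw [hB1]
  calc B = B * A * B := hB2.symm
  _ = C * A * B := by rw [hBA]
  _ = C * (A * B) := by rw [Matrix.mul_assoc]
  _ = C * (A * C) := by rw [hAB]
  _ = C * A * C := by rw [Matrix.mul_assoc]
  _ = C := hC2

theorem exists_isPinv_hermitian {n : Type*} [Fintype n] [DecidableEq n]
    {G : Matrix n n ℝ} (hG : G.IsHermitian) : ∃ B, IsPinv G B ∧ Bᵀ = B := by
  classical
  set V : Matrix n n ℝ := (hG.eigenvectorUnitary : Matrix n n ℝ) with hV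
  set D : Matrix n n ℝ := diagonal (RCLike.ofReal ∘ hG.eigenvalues) with hD
  set D' : Matrix n n ℝ := diagonal (fun i => (hG.eigenvalues i)⁻¹) with hD'
  have hVV : Vᵀ * V = 1 := by
    have := (Matrix.mem_unitaryGroup_iff'.mp hG.eigenvectorUnitary.2)
    simpa [hV, Matrix.star_eq_conjTranspose, Matrix.conjTranspose_eq_transpose_of_trivial] using this
  have hVV' : V * Vᵀ = 1 := by
    have := (Matrix.mem_unitaryGroup_iff.mp hG.eigenvectorUnitary.2)
    simpa [hV, Matrix.star_eq_conjTranspose, Matrix.conjTranspose_eq_transpose_of_trivial] using this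
  have cancel : ∀ (X : Matrix n n ℝ), Vᵀ * (V * X) = X := by
    intro X; rw [← Matrix.mul_assoc, hVV, Matrix.one_mul]
  have hspec : G = V * D * Vᵀ := by
    have := hG.spectral_theorem
    simpa [hV, hD, Matrix.star_eq_conjTranspose, Matrix.conjTranspose_eq_transpose_of_trivial] using this
  have hDt : D'ᵀ = D' := by rw [hD', diagonal_transpose]
  have hDDD : D * D' * D = D := by
    rw [hD, hD', diagonal_mul_diagonal, diagonal_mul_diagonal]
    refine congrArg Matrix.diagonal (funext fun i => ?_)
    rcases eq_or_ne (hG.eigenvalues i) 0 with h | h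
    · simp [Function.comp, h]
    · simp only [Function.comp_apply, RCLike.ofReal_real_eq_id, id_eq]; field_simp
  have hD'DD' : D' * D * D' = D' := by
    rw [hD, hD', diagonal_mul_diagonal, diagonal_mul_diagonal]
    refine congrArg Matrix.diagonal (funext fun i => ?_)
    rcases eq_or_ne (hG.eigenvalues i) 0 with h | h
    · simp [Function.comp, h]
    · simp only [Function.comp_apply, RCLike.ofReal_real_eq_id, id_eq]; field_simp
  have hcomm : D * D' = D' * D := by
    rw [hD, hD', diagonal_mul_diagonal, diagonal_mul_diagonal]
    refine congrArg Matrix.diagonal (funext fun i => ?_)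
    simp only [Function.comp_apply]; ring
  refine ⟨V * D' * Vᵀ, ⟨?_, ?_, ?_, ?_⟩, ?_⟩
  · rw [hspec]
    calc V * D * Vᵀ * (V * D' * Vᵀ) * (V * D * Vᵀ)
        = V * (D * (Vᵀ * (V * (D' * (Vᵀ * (V * (D * Vᵀ))))))) := by
          simp only [Matrix.mul_assoc]
    _ = V * (D * (D' * (D * Vᵀ))) := by rw [cancel, cancel]
    _ = V * (D * D' * D) * Vᵀ := by simp only [Matrix.mul_assoc]
    _ = V * D * Vᵀ := by rw [hDDD, Matrix.mul_assoc]
  · rw [hspec]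
    calc V * D' * Vᵀ * (V * D * Vᵀ) * (V * D' * Vᵀ)
        = V * (D' * (Vᵀ * (V * (D * (Vᵀ * (V * (D' * Vᵀ))))))) := by
          simp only [Matrix.mul_assoc]
    _ = V * (D' * (D * (D' * Vᵀ))) := by rw [cancel, cancel]
    _ = V * (D' * D * D') * Vᵀ := by simp only [Matrix.mul_assoc]
    _ = V * D' * Vᵀ := by rw [hD'DD', Matrix.mul_assoc]
  · have : V * D * Vᵀ * (V * D' * Vᵀ) = V * (D * D') * Vᵀ := by
      calc V * D * Vᵀ * (V * D' * Vᵀ) = V * (D * (Vᵀ * (V * (D' * Vᵀ)))) := by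
            simp only [Matrix.mul_assoc]
      _ = V * (D * (D' * Vᵀ)) := by rw [cancel]
      _ = V * (D * D') * Vᵀ := by simp only [Matrix.mul_assoc]
    rw [hspec, this]
    calc (V * (D * D') * Vᵀ)ᵀ = V * (D * D')ᵀ * Vᵀ := by
          simp only [transpose_mul, transpose_transpose, Matrix.mul_assoc]
    _ = V * (D * D') * Vᵀ := by rw [hD, hD', diagonal_mul_diagonal, diagonal_transpose]
  · have : V * D' * Vᵀ * (V * D * Vᵀ) = V * (D' * D) * Vᵀ := by
      calc V * D' * Vᵀ * (V * D * Vᵀ) = V * (D' * (Vᵀ * (V * (D * Vᵀ)))) := by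
            simp only [Matrix.mul_assoc]
      _ = V * (D' * (D * Vᵀ)) := by rw [cancel]
      _ = V * (D' * D) * Vᵀ := by simp only [Matrix.mul_assoc]
    rw [hspec, this]
    calc (V * (D' * D) * Vᵀ)ᵀ = V * (D' * D)ᵀ * Vᵀ := by
          simp only [transpose_mul, transpose_transpose, Matrix.mul_assoc]
    _ = V * (D' * D) * Vᵀ := by rw [hD, hD', diagonal_mul_diagonal, diagonal_transpose]
  · calc (V * D' * Vᵀ)ᵀ = V * D'ᵀ * Vᵀ := by
          simp only [transpose_mul, transpose_transpose, Matrix.mul_assoc]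
    _ = V * D' * Vᵀ := by rw [hDt]

theorem isPinv_gram_mul {m n : Type*} [Fintype m] [Fintype n]
    (A : Matrix m n ℝ) {G' : Matrix n n ℝ}
    (hG' : IsPinv (Aᵀ * A) G') (hsym : G'ᵀ = G') : IsPinv A (G' * Aᵀ) := by
  set G : Matrix n n ℝ := Aᵀ * A with hG
  obtain ⟨h1, h2, h3, h4⟩ := hG'
  -- G'G = GG'
  have hcomm : G' * G = G * G' := by
    have hGt : Gᵀ = G := by rw [hG, transpose_mul, transpose_transpose]
    calc G' * G = (G' * G)ᵀ := h4.symm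
    _ = Gᵀ * G'ᵀ := by rw [transpose_mul]
    _ = G * G' := by rw [hGt, hsym]
  have key : A * (G' * G) = A := by
    have hM : (A - A * (G' * G))ᵀ * (A - A * (G' * G)) = 0 := by
      have e1 : Aᵀ * (A * (G' * G)) = G * (G' * G) := by
        rw [← Matrix.mul_assoc, ← hG]
      have e2 : (A * (G' * G))ᵀ * A = (G' * G) * G := by
        rw [transpose_mul, Matrix.mul_assoc, ← hG, h4]
      have e3 : (A * (G' * G))ᵀ * (A * (G' * G)) = (G' * G) * (G * (G' * G)) := by
        rw [transpose_mul, h4, Matrix.mul_assoc, ← Matrix.mul_assoc Aᵀ, ← hG]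
      have g1 : G * (G' * G) = G := by rw [← Matrix.mul_assoc, h1]
      have g2 : (G' * G) * G = G := by rw [hcomm]; exact h1
      rw [transpose_sub, Matrix.sub_mul, Matrix.mul_sub, Matrix.mul_sub, e1, e3, g1, e2, g2, ← hG]
      simp
    have h0 : A - A * (G' * G) = 0 := Matrix.conjTranspose_mul_self_eq_zero.mp (by
      rw [Matrix.conjTranspose_eq_transpose_of_trivial]; exact hM)
    exact (sub_eq_zero.mp h0).symm
  refine ⟨?_, ?_, ?_, ?_⟩
  · calc A * (G' * Aᵀ) * A = A * (G' * G) := by rw [hG]; simp only [Matrix.mul_assoc]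
    _ = A := key
  · calc G' * Aᵀ * A * (G' * Aᵀ) = G' * G * G' * Aᵀ := by rw [hG]; simp only [Matrix.mul_assoc]
    _ = G' * Aᵀ := by rw [h2]
  · have e : (A * (G' * Aᵀ))ᵀ = A * (G'ᵀ * Aᵀ) := by
      simp only [transpose_mul, transpose_transpose, Matrix.mul_assoc]
    rw [e, hsym]
  · rw [Matrix.mul_assoc, ← hG, h4]

theorem exists_isPinv {m n : Type*} [Fintype m] [Fintype n] [DecidableEq m] [DecidableEq n]
    (A : Matrix m n ℝ) : ∃ B : Matrix n m ℝ,
      A * B * A = A ∧ B * A * B = B ∧ (A * B)ᵀ = A * B ∧ (B * A)ᵀ = B * A := by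
  have hher : (Aᵀ * A).IsHermitian := by
    have := Matrix.isHermitian_conjTranspose_mul_self A
    simpa using this
  obtain ⟨G', hG', hsym⟩ := exists_isPinv_hermitian hher
  exact ⟨G' * Aᵀ, isPinv_gram_mul A hG' hsym⟩


lemma scalar_one (M : Matrix (Fin 1) (Fin 1) ℝ) : M = M 0 0 • (1 : Matrix (Fin 1) (Fin 1) ℝ) := by
  ext i j; fin_cases i; fin_cases j; simp

lemma entry_tmul_nonneg {ι : Type*} [Fintype ι] (M : Matrix ι (Fin 1) ℝ) : 0 ≤ (Mᵀ * M) 0 0 := by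
  rw [Matrix.mul_apply]
  refine Finset.sum_nonneg fun i _ => ?_
  simp only [Matrix.transpose_apply]
  exact mul_self_nonneg _

lemma entry_tmul_pos {ι : Type*} [Fintype ι] {M : Matrix ι (Fin 1) ℝ} (h : M ≠ 0) :
    0 < (Mᵀ * M) 0 0 := by
  obtain ⟨i, j, hij⟩ : ∃ i j, M i j ≠ 0 := by
    by_contra hc
    push_neg at hc
    exact h (by ext i j; simpa using hc i j)
  have hj : j = 0 := Subsingleton.elim _ _
  subst hj
  rw [Matrix.mul_apply]
  refine Finset.sum_pos' (fun i _ => ?_) ⟨i, Finset.mem_univ i, ?_⟩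
  · simp only [Matrix.transpose_apply]; exact mul_self_nonneg _
  · simp only [Matrix.transpose_apply]
    exact mul_pos_iff.mpr (by rcases lt_or_gt_of_ne hij with h'|h'; exact Or.inr ⟨h',h'⟩; exact Or.inl ⟨h',h'⟩)

lemma trace_fin1 (M : Matrix (Fin 1) (Fin 1) ℝ) : Matrix.trace M = M 0 0 := by
  simp [Matrix.trace, Matrix.diag]

lemma trace_outer {k : Type*} [Fintype k] (x y : Matrix k (Fin 1) ℝ) :
    Matrix.trace (x * yᵀ) = (yᵀ * x) 0 0 := by
  rw [Matrix.trace_mul_comm, trace_fin1]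


open scoped Classical in
/-- The Moore–Penrose pseudoinverse of a real matrix, characterised by the four
Penrose conditions:  `A A† A = A`, `A† A A† = A†`, `(A A†)ᵀ = A A†`, `(A† A)ᵀ = A† A`. -/
noncomputable def pinv {m n : Type*} [Fintype m] [Fintype n] [DecidableEq m] [DecidableEq n]
    (A : Matrix m n ℝ) : Matrix n m ℝ :=
  if h : ∃ B : Matrix n m ℝ,
      A * B * A = A ∧ B * A * B = B ∧ (A * B)ᵀ = A * B ∧ (B * A)ᵀ = B * A
  then h.choose else 0

/-- The sampling matrix `M_S` of a subset `S ⊆ {1,…,N}`: rows are indexed by the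
elements of `S`, and the row corresponding to `j ∈ S` is the standard basis row vector `eⱼᵀ`. -/
def samp {N : ℕ} (S : Finset (Fin N)) : Matrix {x // x ∈ S} (Fin N) ℝ :=
  fun i j => if (i : Fin N) = j then 1 else 0

/-- Squared Frobenius norm of a matrix. -/
def frobSq {m n : Type*} [Fintype m] [Fintype n] (A : Matrix m n ℝ) : ℝ :=
  ∑ i, ∑ j, (A i j) ^ 2

/-- The least-squares reconstruction matrix `R_S = U (M_S U)†`. -/
def lsRec {N k : ℕ} (U : Matrix (Fin N) (Fin k) ℝ) (S : Finset (Fin N)) :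
    Matrix (Fin N) {x // x ∈ S} ℝ :=
  U * pinv (samp S * U)

/-- `ξ₁(S) = ‖U − R_S M_S U‖_F²`, the noiseless reconstruction error. -/
def xi1 {N k : ℕ} (U : Matrix (Fin N) (Fin k) ℝ) (S : Finset (Fin N)) : ℝ :=
  frobSq (U - lsRec U S * (samp S * U))

/-- `ξ₂(S) = ‖R_S‖_F²`, the noise-sensitivity term. -/
def xi2 {N k : ℕ} (U : Matrix (Fin N) (Fin k) ℝ) (S : Finset (Fin N)) : ℝ :=
  frobSq (lsRec U S)

theorem pinv_isPinv {m n : Type*} [Fintype m] [Fintype n] [DecidableEq m] [DecidableEq n]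
    (A : Matrix m n ℝ) : IsPinv A (pinv A) := by
  unfold pinv
  rw [dif_pos (exists_isPinv A)]
  exact (exists_isPinv A).choose_spec

theorem pinv_eq {m n : Type*} [Fintype m] [Fintype n] [DecidableEq m] [DecidableEq n]
    {A : Matrix m n ℝ} {B : Matrix n m ℝ} (h : IsPinv A B) : pinv A = B :=
  isPinv_unique (pinv_isPinv A) h

theorem isPinv_transpose {m n : Type*} [Fintype m] [Fintype n]
    {A : Matrix m n ℝ} {B : Matrix n m ℝ} (h : IsPinv A B) : IsPinv Aᵀ Bᵀ := by
  obtain ⟨h1, h2, h3, h4⟩ := h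
  refine ⟨?_, ?_, ?_, ?_⟩
  · rw [← transpose_mul, ← transpose_mul, ← Matrix.mul_assoc, h1]
  · rw [← transpose_mul, ← transpose_mul, ← Matrix.mul_assoc, h2]
  · rw [← transpose_mul, transpose_transpose, h4]
  · rw [← transpose_mul, transpose_transpose, h3]

theorem pinv_symm {n : Type*} [Fintype n] [DecidableEq n]
    {H : Matrix n n ℝ} (hH : Hᵀ = H) : (pinv H)ᵀ = pinv H := by
  have : pinv (Hᵀ) = (pinv H)ᵀ := pinv_eq (isPinv_transpose (pinv_isPinv H))
  rw [hH] at this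
  exact this.symm

theorem pinv_gram {m n : Type*} [Fintype m] [Fintype n] [DecidableEq m] [DecidableEq n]
    (A : Matrix m n ℝ) : pinv A = pinv (Aᵀ * A) * Aᵀ := by
  have hGt : (Aᵀ * A)ᵀ = Aᵀ * A := by rw [transpose_mul, transpose_transpose]
  exact pinv_eq (isPinv_gram_mul A (pinv_isPinv _) (pinv_symm hGt))

theorem key_dichotomy {k : ℕ} {ι : Type*} [Fintype ι]
    (B : Matrix ι (Fin k) ℝ) (c : Matrix (Fin k) (Fin 1) ℝ)
    {H G : Matrix (Fin k) (Fin k) ℝ} (hH : H = Bᵀ * B) (hG : G = H + c * cᵀ) :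
    (trace (pinv G * G) = trace (pinv H * H) ∧ trace (pinv G) ≤ trace (pinv H)) ∨
    (trace (pinv H * H) + 1 = trace (pinv G * G) ∧ trace (pinv H) < trace (pinv G)) := by
  have hHt : Hᵀ = H := by rw [hH, transpose_mul, transpose_transpose]
  have hGt : Gᵀ = G := by rw [hG, transpose_add, hHt, transpose_mul, transpose_transpose]
  obtain ⟨p1, p2, p3, p4⟩ := pinv_isPinv H
  set H' : Matrix (Fin k) (Fin k) ℝ := pinv H with hH'def
  have hH't : H'ᵀ = H' := pinv_symm hHt
  have hcommH : H * H' = H' * H := by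
    calc H * H' = (H * H')ᵀ := p3.symm
    _ = H'ᵀ * Hᵀ := by rw [transpose_mul]
    _ = H' * H := by rw [hH't, hHt]
  set P : Matrix (Fin k) (Fin k) ℝ := H' * H with hPdef
  -- p2 : P * H' = H', p4 : Pᵀ = P after `set`
  have hPt : Pᵀ = P := p4
  have hPH' : P * H' = H' := p2
  have hPP : P * P = P := by
    calc P * P = H' * (H * H' * H) := by rw [hPdef]; simp only [Matrix.mul_assoc]
    _ = H' * H := by rw [p1]
    _ = P := hPdef.symm
  have hPH : P * H = H := by
    have e : P = H * H' := hcommH.symm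
    rw [e]; exact p1
  have hHP : H * P = H := by
    rw [hPdef, ← Matrix.mul_assoc]; exact p1
  have hH'P : H' * P = H' := by
    rw [← hcommH, ← Matrix.mul_assoc, ← hPdef]; exact p2
  set u : Matrix (Fin k) (Fin 1) ℝ := H' * c with hudef
  set d : Matrix (Fin k) (Fin 1) ℝ := c - P * c with hddef
  set βr : ℝ := (cᵀ * u) 0 0 with hβrdef
  set β : ℝ := 1 + βr with hβdef
  set δ : ℝ := (dᵀ * d) 0 0 with hδdef
  have hcu : cᵀ * u = βr • 1 := scalar_one _
  have hPu : P * u = u := by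
    rw [hudef, ← Matrix.mul_assoc, hPH']
  have hHu : H * u = c - d := by
    have : H * u = P * c := by
      rw [hudef, ← Matrix.mul_assoc, hcommH]
    rw [this, hddef]; abel
  have hHd : H * d = 0 := by
    rw [hddef, Matrix.mul_sub, ← Matrix.mul_assoc, hHP, sub_self]
  have hH'd : H' * d = 0 := by
    rw [hddef, Matrix.mul_sub, ← Matrix.mul_assoc, hH'P, sub_self]
  have hPd : P * d = 0 := by
    rw [hddef, Matrix.mul_sub, ← Matrix.mul_assoc, hPP, sub_self]
  have hdH : dᵀ * H = 0 := by
    have := congrArg Matrix.transpose hHd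
    rwa [transpose_mul, hHt, transpose_zero] at this
  have hdH' : dᵀ * H' = 0 := by
    have := congrArg Matrix.transpose hH'd
    rwa [transpose_mul, hH't, transpose_zero] at this
  have hcH' : cᵀ * H' = uᵀ := by
    rw [hudef, transpose_mul, hH't]
  have hud : uᵀ * d = 0 := by
    rw [hudef, transpose_mul, hH't, Matrix.mul_assoc, hH'd, Matrix.mul_zero]
  have hdu : dᵀ * u = 0 := by
    have := congrArg Matrix.transpose hud
    rwa [transpose_mul, transpose_transpose, transpose_zero] at this
  have huc : uᵀ * c = βr • 1 := by
    have := congrArg Matrix.transpose hcu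
    rwa [transpose_mul, transpose_transpose, transpose_smul, transpose_one] at this
  have hdd : dᵀ * d = δ • 1 := scalar_one _
  have hcd : cᵀ * d = δ • 1 := by
    have h2 : (P*c)ᵀ * (P*c) = cᵀ * (P * c) := by
      rw [transpose_mul, hPt, Matrix.mul_assoc, ← Matrix.mul_assoc P, hPP]
    have h1 : (P*c)ᵀ * c = cᵀ * (P * c) := by
      rw [transpose_mul, hPt, Matrix.mul_assoc]
    have e : dᵀ * d = cᵀ * d := by
      rw [hddef, transpose_sub, Matrix.sub_mul, Matrix.mul_sub, Matrix.mul_sub, h1, h2]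
      abel
    rw [← e, hdd]
  have hdc : dᵀ * c = δ • 1 := by
    have := congrArg Matrix.transpose hcd
    rwa [transpose_mul, transpose_transpose, transpose_smul, transpose_one] at this
  -- βr ≥ 0
  have hβrnn : 0 ≤ βr := by
    have hHuP : H * u = P * c := by
      rw [hudef, ← Matrix.mul_assoc, hcommH]
    have hw : (B * u)ᵀ * (B * u) = cᵀ * u := by
      calc (B * u)ᵀ * (B * u) = uᵀ * (Bᵀ * B * u) := by
            rw [transpose_mul]; simp only [Matrix.mul_assoc]
      _ = uᵀ * (P * c) := by rw [← hH, hHuP]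
      _ = cᵀ * ((H' * P) * c) := by
            rw [hudef, transpose_mul, hH't]; simp only [Matrix.mul_assoc]
      _ = cᵀ * u := by rw [hH'P, ← hudef]
    have := entry_tmul_nonneg (B * u)
    rw [hw] at this
    exact this
  have hβpos : (0:ℝ) < β := by rw [hβdef]; linarith
  have hβne : β ≠ 0 := ne_of_gt hβpos
  by_cases hd0 : d = 0
  · -- c ∈ range H : rank unchanged
    left
    have hPc : P * c = c := by
      have : c - P * c = 0 := by rw [← hddef, hd0]
      have := sub_eq_zero.mp this
      exact this.symm
    have hHu' : H * u = c := by rw [hHu, hd0, sub_zero]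
    set K : Matrix (Fin k) (Fin k) ℝ := H' - β⁻¹ • (u * uᵀ) with hKdef
    have hKt : Kᵀ = K := by
      rw [hKdef, transpose_sub, transpose_smul, transpose_mul, transpose_transpose, hH't]
    have hGK : G * K = P := by
      have eB : H * (β⁻¹ • (u * uᵀ)) = β⁻¹ • (c * uᵀ) := by
        rw [Matrix.mul_smul, ← Matrix.mul_assoc, hHu']
      have eC : (c * cᵀ) * H' = c * uᵀ := by rw [Matrix.mul_assoc, hcH']
      have eD : (c * cᵀ) * (β⁻¹ • (u * uᵀ)) = (β⁻¹ * βr) • (c * uᵀ) := by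
        have e : (c * cᵀ) * (u * uᵀ) = βr • (c * uᵀ) := by
          calc (c * cᵀ) * (u * uᵀ) = c * ((cᵀ * u) * uᵀ) := by simp only [Matrix.mul_assoc]
          _ = c * ((βr • (1 : Matrix (Fin 1) (Fin 1) ℝ)) * uᵀ) := by rw [hcu]
          _ = βr • (c * uᵀ) := by rw [Matrix.smul_mul, Matrix.one_mul, Matrix.mul_smul]
        rw [Matrix.mul_smul, e, smul_smul]
      have expand : G * K = H * H' - H * (β⁻¹ • (u * uᵀ))
          + ((c * cᵀ) * H' - (c * cᵀ) * (β⁻¹ • (u * uᵀ))) := by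
        rw [hG, hKdef, Matrix.add_mul, Matrix.mul_sub, Matrix.mul_sub]
      rw [expand, eB, eC, eD, hcommH]
      have hβr' : βr = β - 1 := by rw [hβdef]; ring
      have hco : β⁻¹ * βr = 1 - β⁻¹ := by
        rw [hβr', mul_sub, inv_mul_cancel₀ hβne, mul_one]
      rw [hco]
      module
    have hKG : K * G = P := by
      have e : K * G = (Gᵀ * Kᵀ)ᵀ := by
        rw [transpose_mul, transpose_transpose, transpose_transpose]
      rw [e, hGt, hKt, hGK, hPt]
    have hPG : P * G = G := by
      rw [hG, Matrix.mul_add, hPH, ← Matrix.mul_assoc, hPc]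
    have hPK : P * K = K := by
      rw [hKdef, Matrix.mul_sub, Matrix.mul_smul, ← Matrix.mul_assoc, hPu, hPH']
    have hpinvG : pinv G = K := by
      refine pinv_eq ⟨?_, ?_, ?_, ?_⟩
      · rw [hGK, hPG]
      · rw [hKG, hPK]
      · rw [hGK, hPt]
      · rw [hKG, hPt]
    constructor
    · rw [hpinvG, hKG, hPdef]
    · rw [hpinvG, hKdef, trace_sub, trace_smul]
      have h1 : trace (u * uᵀ) = (uᵀ * u) 0 0 := trace_outer u u
      have h2 : (0:ℝ) ≤ (uᵀ * u) 0 0 := entry_tmul_nonneg u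
      have h3 : (0:ℝ) ≤ β⁻¹ := by positivity
      have : (0:ℝ) ≤ β⁻¹ • trace (u * uᵀ) := by
        rw [h1, smul_eq_mul]; positivity
      linarith [this]
  · -- c ∉ range H : rank drops
    right
    have hδpos : (0:ℝ) < δ := entry_tmul_pos hd0
    have hδne : δ ≠ 0 := ne_of_gt hδpos
    set K : Matrix (Fin k) (Fin k) ℝ :=
      H' - δ⁻¹ • (u * dᵀ) - δ⁻¹ • (d * uᵀ) + (β / δ ^ 2) • (d * dᵀ) with hKdef
    set Q : Matrix (Fin k) (Fin k) ℝ := P + δ⁻¹ • (d * dᵀ) with hQdef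
    have hQt : Qᵀ = Q := by
      rw [hQdef, transpose_add, hPt, transpose_smul, transpose_mul, transpose_transpose]
    have hKt : Kᵀ = K := by
      rw [hKdef]
      simp only [transpose_add, transpose_sub, transpose_smul, transpose_mul,
        transpose_transpose, hH't]
      abel
    -- outer-product multiplication helpers
    have outer : ∀ (x y z w : Matrix (Fin k) (Fin 1) ℝ) (s : ℝ), yᵀ * z = s • 1 →
        (x * yᵀ) * (z * wᵀ) = s • (x * wᵀ) := by
      intro x y z w s hs
      calc (x * yᵀ) * (z * wᵀ) = x * ((yᵀ * z) * wᵀ) := by simp only [Matrix.mul_assoc]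
      _ = x * ((s • (1 : Matrix (Fin 1) (Fin 1) ℝ)) * wᵀ) := by rw [hs]
      _ = s • (x * wᵀ) := by rw [Matrix.smul_mul, Matrix.one_mul, Matrix.mul_smul]
    have outer0 : ∀ (x y z w : Matrix (Fin k) (Fin 1) ℝ), yᵀ * z = 0 →
        (x * yᵀ) * (z * wᵀ) = 0 := by
      intro x y z w hs
      calc (x * yᵀ) * (z * wᵀ) = x * ((yᵀ * z) * wᵀ) := by simp only [Matrix.mul_assoc]
      _ = 0 := by rw [hs, Matrix.zero_mul, Matrix.mul_zero]
    have hGK : G * K = Q := by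
      have hHK : H * K = P - δ⁻¹ • (c * dᵀ) + δ⁻¹ • (d * dᵀ) := by
        have e1 : H * (δ⁻¹ • (u * dᵀ)) = δ⁻¹ • ((c - d) * dᵀ) := by
          rw [Matrix.mul_smul, ← Matrix.mul_assoc, hHu]
        have e2 : H * (δ⁻¹ • (d * uᵀ)) = 0 := by
          rw [Matrix.mul_smul, ← Matrix.mul_assoc, hHd, Matrix.zero_mul, smul_zero]
        have e3 : H * ((β / δ ^ 2) • (d * dᵀ)) = 0 := by
          rw [Matrix.mul_smul, ← Matrix.mul_assoc, hHd, Matrix.zero_mul, smul_zero]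
        rw [hKdef, Matrix.mul_add, Matrix.mul_sub, Matrix.mul_sub, e1, e2, e3,
          hcommH, Matrix.sub_mul]
        module
      have hccK : (c * cᵀ) * K = δ⁻¹ • (c * dᵀ) := by
        have e1 : (c * cᵀ) * H' = c * uᵀ := by rw [Matrix.mul_assoc, hcH']
        have e2 : (c * cᵀ) * (δ⁻¹ • (u * dᵀ)) = (δ⁻¹ * βr) • (c * dᵀ) := by
          rw [Matrix.mul_smul, outer c c u d βr hcu, smul_smul]
        have e3 : (c * cᵀ) * (δ⁻¹ • (d * uᵀ)) = (δ⁻¹ * δ) • (c * uᵀ) := by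
          rw [Matrix.mul_smul, outer c c d u δ hcd, smul_smul]
        have e4 : (c * cᵀ) * ((β / δ ^ 2) • (d * dᵀ)) = ((β / δ ^ 2) * δ) • (c * dᵀ) := by
          rw [Matrix.mul_smul, outer c c d d δ hcd, smul_smul]
        rw [hKdef, Matrix.mul_add, Matrix.mul_sub, Matrix.mul_sub, e1, e2, e3, e4]
        have s1 : δ⁻¹ * δ = 1 := inv_mul_cancel₀ hδne
        have sC : (β / δ ^ 2) * δ = β / δ := by
          rw [pow_two, div_mul_eq_mul_div, ← div_div, mul_div_assoc, div_self hδne, mul_one]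
        have s2 : (β / δ ^ 2) * δ = δ⁻¹ + δ⁻¹ * βr := by
          rw [sC, hβdef, add_div, one_div, div_eq_inv_mul]
        rw [s1, s2]
        module
      calc G * K = H * K + c * (cᵀ * K) := by
            rw [hG, Matrix.add_mul, Matrix.mul_assoc]
      _ = H * K + (c * cᵀ) * K := by rw [Matrix.mul_assoc]
      _ = P - δ⁻¹ • (c * dᵀ) + δ⁻¹ • (d * dᵀ) + δ⁻¹ • (c * dᵀ) := by rw [hHK, hccK]
      _ = Q := by rw [hQdef]; module
    have hKG : K * G = Q := by
      have e : K * G = (Gᵀ * Kᵀ)ᵀ := by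
        rw [transpose_mul, transpose_transpose, transpose_transpose]
      rw [e, hGt, hKt, hGK, hQt]
    have hQG : Q * G = G := by
      have e1 : Q * H = H := by
        rw [hQdef, Matrix.add_mul, hPH, Matrix.smul_mul, Matrix.mul_assoc, hdH,
          Matrix.mul_zero, smul_zero, add_zero]
      have e2 : Q * c = c := by
        have t : (δ⁻¹ • (d * dᵀ)) * c = d := by
          rw [Matrix.smul_mul, Matrix.mul_assoc, hdc, Matrix.mul_smul, Matrix.mul_one,
            smul_smul, inv_mul_cancel₀ hδne, one_smul]
        rw [hQdef, Matrix.add_mul, t, hddef]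
        abel
      calc Q * G = Q * H + (Q * c) * cᵀ := by
            rw [hG, Matrix.mul_add, Matrix.mul_assoc]
      _ = G := by rw [e1, e2, hG]
    have hQK : Q * K = K := by
      have ePK : P * K = H' - δ⁻¹ • (u * dᵀ) := by
        have e1 : P * (δ⁻¹ • (u * dᵀ)) = δ⁻¹ • (u * dᵀ) := by
          rw [Matrix.mul_smul, ← Matrix.mul_assoc, hPu]
        have e2 : P * (δ⁻¹ • (d * uᵀ)) = 0 := by
          rw [Matrix.mul_smul, ← Matrix.mul_assoc, hPd, Matrix.zero_mul, smul_zero]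
        have e3 : P * ((β / δ ^ 2) • (d * dᵀ)) = 0 := by
          rw [Matrix.mul_smul, ← Matrix.mul_assoc, hPd, Matrix.zero_mul, smul_zero]
        rw [hKdef, Matrix.mul_add, Matrix.mul_sub, Matrix.mul_sub, e1, e2, e3, hPH']
        abel
      have edK : (d * dᵀ) * K = -(d * uᵀ) + (β / δ) • (d * dᵀ) := by
        have e1 : (d * dᵀ) * H' = 0 := by rw [Matrix.mul_assoc, hdH', Matrix.mul_zero]
        have e2 : (d * dᵀ) * (δ⁻¹ • (u * dᵀ)) = 0 := by
          rw [Matrix.mul_smul, outer0 d d u d hdu, smul_zero]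
        have e3 : (d * dᵀ) * (δ⁻¹ • (d * uᵀ)) = (δ⁻¹ * δ) • (d * uᵀ) := by
          rw [Matrix.mul_smul, outer d d d u δ hdd, smul_smul]
        have e4 : (d * dᵀ) * ((β / δ ^ 2) • (d * dᵀ)) = ((β / δ ^ 2) * δ) • (d * dᵀ) := by
          rw [Matrix.mul_smul, outer d d d d δ hdd, smul_smul]
        rw [hKdef, Matrix.mul_add, Matrix.mul_sub, Matrix.mul_sub, e1, e2, e3, e4]
        have s1 : δ⁻¹ * δ = 1 := inv_mul_cancel₀ hδne
        have s2 : (β / δ ^ 2) * δ = β / δ := by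
          rw [pow_two, div_mul_eq_mul_div, ← div_div, mul_div_assoc, div_self hδne, mul_one]
        rw [s1, s2]
        module
      calc Q * K = P * K + δ⁻¹ • ((d * dᵀ) * K) := by
            rw [hQdef, Matrix.add_mul, Matrix.smul_mul]
      _ = H' - δ⁻¹ • (u * dᵀ) + δ⁻¹ • (-(d * uᵀ) + (β / δ) • (d * dᵀ)) := by
            rw [ePK, edK]
      _ = K := by
            rw [hKdef]
            have s3 : δ⁻¹ * (β / δ) = β / δ ^ 2 := by
              rw [inv_mul_eq_div, div_div, ← pow_two]
            rw [smul_add, smul_smul, s3, smul_neg]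
            abel
    have hpinvG : pinv G = K := by
      refine pinv_eq ⟨?_, ?_, ?_, ?_⟩
      · rw [hGK, hQG]
      · rw [hKG, hQK]
      · rw [hGK, hQt]
      · rw [hKG, hQt]
    constructor
    · rw [hpinvG, hKG, hQdef, trace_add, trace_smul, trace_outer d d, ← hδdef, hPdef,
        smul_eq_mul, inv_mul_cancel₀ hδne]
    · rw [hpinvG, hKdef, trace_add, trace_sub, trace_sub, trace_smul, trace_smul, trace_smul,
        trace_outer u d, trace_outer d u, trace_outer d d, hdu, hud, ← hδdef]
      simp only [Matrix.zero_apply, smul_zero, smul_eq_mul]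
      have : 0 < β / δ ^ 2 * δ := by positivity
      linarith

lemma frobSq_eq_trace {m n : Type*} [Fintype m] [Fintype n] (M : Matrix m n ℝ) :
    frobSq M = trace (Mᵀ * M) := by
  simp only [frobSq, Matrix.trace, Matrix.diag, Matrix.mul_apply, Matrix.transpose_apply,
    pow_two]
  exact Finset.sum_comm


lemma xi1_eq {N k : ℕ} (U : Matrix (Fin N) (Fin k) ℝ) (hU : Uᵀ * U = 1)
    (T : Finset (Fin N)) :
    xi1 U T = (k : ℝ) -
      trace (pinv ((samp T * U)ᵀ * (samp T * U)) * ((samp T * U)ᵀ * (samp T * U))) := by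
  classical
  set A : Matrix {x // x ∈ T} (Fin k) ℝ := samp T * U with hA
  obtain ⟨p1, p2, p3, p4⟩ := pinv_isPinv A
  set Q : Matrix (Fin k) (Fin k) ℝ := pinv A * A with hQ
  have hQt : Qᵀ = Q := p4
  have hQQ : Q * Q = Q := by
    calc Q * Q = pinv A * (A * pinv A * A) := by rw [hQ]; simp only [Matrix.mul_assoc]
    _ = Q := by rw [p1, hQ]
  have hrec : lsRec U T * (samp T * U) = U * Q := by
    rw [lsRec, hQ, ← hA, Matrix.mul_assoc]
  have hXX : (U - U * Q)ᵀ * (U - U * Q) = 1 - Q := by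
    have t1 : Uᵀ * (U * Q) = Q := by rw [← Matrix.mul_assoc, hU, Matrix.one_mul]
    have t2 : (U * Q)ᵀ * U = Q := by
      rw [transpose_mul, Matrix.mul_assoc, hU, Matrix.mul_one, hQt]
    have t3 : (U * Q)ᵀ * (U * Q) = Q := by
      rw [transpose_mul, Matrix.mul_assoc, ← Matrix.mul_assoc Uᵀ, hU, Matrix.one_mul, hQt, hQQ]
    rw [transpose_sub, Matrix.sub_mul, Matrix.mul_sub, Matrix.mul_sub, hU, t1, t2, t3]
    abel
  have hQG : Q = pinv (Aᵀ * A) * (Aᵀ * A) := by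
    rw [hQ, pinv_gram A, Matrix.mul_assoc]
  rw [xi1, hrec, frobSq_eq_trace, hXX, trace_sub, trace_one, ← hQG]
  simp
lemma xi2_eq {N k : ℕ} (U : Matrix (Fin N) (Fin k) ℝ) (hU : Uᵀ * U = 1)
    (T : Finset (Fin N)) :
    xi2 U T = trace (pinv ((samp T * U)ᵀ * (samp T * U))) := by
  classical
  set A : Matrix {x // x ∈ T} (Fin k) ℝ := samp T * U with hA
  set G : Matrix (Fin k) (Fin k) ℝ := Aᵀ * A with hG
  have hGt : Gᵀ = G := by rw [hG, transpose_mul, transpose_transpose]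
  obtain ⟨q1, q2, q3, q4⟩ := pinv_isPinv G
  have t1 : (U * pinv A)ᵀ * (U * pinv A) = (pinv A)ᵀ * pinv A := by
    rw [transpose_mul, Matrix.mul_assoc, ← Matrix.mul_assoc Uᵀ, hU, Matrix.one_mul]
  have t2 : pinv A * (pinv A)ᵀ = pinv G := by
    rw [pinv_gram A, ← hG]
    have e : (pinv G * Aᵀ)ᵀ = A * pinv G := by
      rw [transpose_mul (pinv G) Aᵀ, transpose_transpose, pinv_symm hGt]
    rw [e]
    calc pinv G * Aᵀ * (A * pinv G) = pinv G * (Aᵀ * A) * pinv G := by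
          simp only [Matrix.mul_assoc]
    _ = pinv G := by rw [← hG, q2]
  rw [xi2, lsRec, ← hA, frobSq_eq_trace, t1, Matrix.trace_mul_comm, t2]

lemma gram_split {N k : ℕ} (U : Matrix (Fin N) (Fin k) ℝ) (S : Finset (Fin N))
    (v : Fin N) (hv : v ∈ S) :
    (samp S * U)ᵀ * (samp S * U) =
      (samp (S.erase v) * U)ᵀ * (samp (S.erase v) * U)
        + (Matrix.of fun i (_ : Fin 1) => U v i) * (Matrix.of fun i (_ : Fin 1) => U v i)ᵀ := by
  classical
  have hentry : ∀ (T : Finset (Fin N)) (a : {x // x ∈ T}) (i : Fin k),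
      (samp T * U) a i = U (a : Fin N) i := by
    intro T a i
    rw [Matrix.mul_apply]
    simp [samp]
  have hgram : ∀ (T : Finset (Fin N)) (i j : Fin k),
      ((samp T * U)ᵀ * (samp T * U)) i j = ∑ x ∈ T, U x i * U x j := by
    intro T i j
    rw [Matrix.mul_apply]
    simp only [Matrix.transpose_apply, hentry]
    rw [← Finset.sum_coe_sort T (fun x => U x i * U x j)]
  ext i j
  simp only [Matrix.add_apply, hgram]
  have hsum := Finset.sum_erase_add S (fun x => U x i * U x j) hv
  rw [← hsum]
  congr 1
  rw [Matrix.mul_apply]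
  simp [Matrix.transpose_apply]


/-- for `|S| ≥ 2` and `v ∈ S`, `Δ₁(S,v) < 0 ↔ Δ₂(S,v) > 0`: removing a
vertex strictly increases the noiseless reconstruction error exactly when it strictly
decreases the noise-sensitivity term. -/
theorem stmt9 (N k : ℕ) (hN : 0 < N) (hk : 0 < k) (hkN : k ≤ N)
    (U : Matrix (Fin N) (Fin k) ℝ) (hU : Uᵀ * U = 1)
    (S : Finset (Fin N)) (hS : 2 ≤ S.card) (v : Fin N) (hv : v ∈ S) :
    xi1 U S - xi1 U (S.erase v) < 0 ↔ 0 < xi2 U S - xi2 U (S.erase v) := by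
  classical
  have hd := key_dichotomy (samp (S.erase v) * U) (Matrix.of fun i (_ : Fin 1) => U v i)
    (rfl : (samp (S.erase v) * U)ᵀ * (samp (S.erase v) * U) = _)
    (gram_split U S v hv)
  rw [xi1_eq U hU S, xi1_eq U hU (S.erase v), xi2_eq U hU S, xi2_eq U hU (S.erase v)]
  rcases hd with ⟨h1, h2⟩ | ⟨h1, h2⟩
  · constructor
    · intro h; linarith
    · intro h; linarith
  · constructor
    · intro h; linarith
    · intro h; linarith
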